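/- For every k ∈ ℝ such that p(k/λᵐ) ≠ 0 for all integers m ≥ 1 (equivalently k ∉ ∪_{m≥1} λᵐ·Z with Z = ℤ + {1/3, 2/3}), one has lim_{n→∞} (1/n)·log|det(B(k/λⁿ)·B(k/λⁿ⁻¹)·…·B(k/λ))| = log 3; equivalently, lim_{n→∞} (1/n)·∑_{m=1}^{n} log|p(k/λᵐ)| = log 3. -/

import Mathlib

open Filter

/-- The Perron–Frobenius eigenvalue `λ = (1+√13)/2` of `M = [[1,1],[3,0]]`. -/
noncomputable def lam : ℝ := (1 + Real.sqrt 13) / 2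

/-- `p(k) = e^{2πikλ} + e^{2πik(λ+1)} + e^{2πik(λ+2)}`. -/
noncomputable def pfun (k : ℝ) : ℂ :=
  Complex.exp (((2 * Real.pi * k * lam : ℝ) : ℂ) * Complex.I) +
  Complex.exp (((2 * Real.pi * k * (lam + 1) : ℝ) : ℂ) * Complex.I) +
  Complex.exp (((2 * Real.pi * k * (lam + 2) : ℝ) : ℂ) * Complex.I)

/-- The Fourier matrix `B(k) = [[1,1],[p(k),0]]`. -/
noncomputable def Bmat (k : ℝ) : Matrix (Fin 2) (Fin 2) ℂ :=
  !![1, 1; pfun k, 0]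

/-- The inward matrix product `Binw k n = B(k/λⁿ)·B(k/λⁿ⁻¹)·…·B(k/λ)`. -/
noncomputable def Binw (k : ℝ) : ℕ → Matrix (Fin 2) (Fin 2) ℂ
  | 0 => 1
  | n + 1 => Bmat (k / lam ^ (n + 1)) * Binw k n

/-! Since `det B(k) = -p(k)`, `|det|` of the product is `∏ₘ |p(k/λᵐ)|`, whose logarithm is
`∑ₘ log |p(k/λᵐ)|` because no factor vanishes. As `k/λᵐ → 0` and `p` is continuous with `p(0) = 3`,
the summands tend to `log 3`, and Cesàro averaging gives the limit. -/

open Finset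

theorem Filter.Tendsto.cesaro_Icc {u : ℕ → ℝ} {l : ℝ} (h : Tendsto u atTop (nhds l)) :
    Tendsto (fun n : ℕ => (n : ℝ)⁻¹ * ∑ m ∈ Icc 1 n, u m) atTop (nhds l) := by
  have hshift : ∀ n, ∑ m ∈ Icc 1 n, u m = ∑ i ∈ range n, u (i + 1) := by
    intro n
    rw [range_eq_Ico, sum_Ico_add' u 0 n 1, zero_add, Ico_add_one_right_eq_Icc]
  simpa only [hshift, Function.comp_def] using (h.comp (tendsto_add_atTop_nat 1)).cesaro

lemma one_lt_lam : 1 < lam := by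
  have : (3 : ℝ) < Real.sqrt 13 := by
    rw [Real.lt_sqrt (by norm_num)]; norm_num
  unfold lam; linarith

lemma continuous_pfun : Continuous pfun := by
  unfold pfun; fun_prop

lemma pfun_zero : pfun 0 = 3 := by
  norm_num [pfun]

lemma tendsto_log_norm_pfun (k : ℝ) :
    Tendsto (fun m : ℕ => Real.log ‖pfun (k / lam ^ m)‖) atTop (nhds (Real.log 3)) := by
  have hk : Tendsto (fun m : ℕ => k / lam ^ m) atTop (nhds 0) :=
    tendsto_const_nhds.div_atTop (tendsto_pow_atTop_atTop_of_one_lt one_lt_lam)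
  have hlog : ContinuousAt (fun x => Real.log ‖pfun x‖) 0 :=
    (Real.continuousAt_log (by norm_num [pfun_zero])).comp continuous_pfun.norm.continuousAt
  simpa [pfun_zero, Function.comp_def] using hlog.tendsto.comp hk

lemma det_Bmat (k : ℝ) : (Bmat k).det = -pfun k := by
  simp [Bmat, Matrix.det_fin_two_of]

lemma norm_det_Binw (k : ℝ) (n : ℕ) :
    ‖(Binw k n).det‖ = ∏ m ∈ Icc 1 n, ‖pfun (k / lam ^ m)‖ := by
  induction n with
  | zero => simp [Binw]
  | succ n ih =>
    rw [prod_Icc_succ_top (Nat.le_add_left 1 n), ← ih, Binw, Matrix.det_mul, det_Bmat,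
      norm_mul, norm_neg, mul_comm]

lemma log_norm_det_Binw (k : ℝ) (hk : ∀ m : ℕ, 1 ≤ m → pfun (k / lam ^ m) ≠ 0) (n : ℕ) :
    Real.log ‖(Binw k n).det‖ = ∑ m ∈ Icc 1 n, Real.log ‖pfun (k / lam ^ m)‖ := by
  rw [norm_det_Binw, Real.log_prod]
  intro m hm
  exact norm_ne_zero_iff.mpr (hk m (mem_Icc.mp hm).1)

/-- For every `k ∈ ℝ` with `p(k/λᵐ) ≠ 0` for all `m ≥ 1`, one has
`lim_{n→∞} (1/n)·log|det(B(k/λⁿ)·…·B(k/λ))| = log 3`; equivalently,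
`lim_{n→∞} (1/n)·∑_{m=1}^n log|p(k/λᵐ)| = log 3`. -/
theorem stmt5 (k : ℝ) (hk : ∀ m : ℕ, 1 ≤ m → pfun (k / lam ^ m) ≠ 0) :
    Tendsto (fun n : ℕ => (n : ℝ)⁻¹ * Real.log ‖(Binw k n).det‖)
      atTop (nhds (Real.log 3)) ∧
    Tendsto (fun n : ℕ =>
        (n : ℝ)⁻¹ * ∑ m ∈ Finset.Icc 1 n, Real.log ‖pfun (k / lam ^ m)‖)
      atTop (nhds (Real.log 3)) := by
  have hmean := (tendsto_log_norm_pfun k).cesaro_Icc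
  exact ⟨by simpa only [log_norm_det_Binw k hk] using hmean, hmean⟩
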